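/- arXiv:2601.03241 — 5 statements merged into one kernel-verified Lean document; each statement's English description precedes it below -/
import Mathlib

section
/- For any two matrices A (a×m) and B (b×m) over a field, the rank of the vertical stack [A; B] equals rank(A) plus the dimension of the image of the null space of A under B, i.e., rank([A;B]) = rank(A) + dim(B·N(A)), where B·N(A) = {Bx : Ax = 0}. -/
/-!
Rank–nullity applied three times. The kernel of `[A; B]` is `N(A) ∩ N(B)`, so
`rank [A; B] = m - dim (N(A) ∩ N(B))` and `rank A = m - dim N(A)`; restricting `B` to `N(A)`
gives a map with image `B·N(A)` and kernel `N(A) ∩ N(B)`, so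
`dim N(A) = dim (B·N(A)) + dim (N(A) ∩ N(B))`.
-/

open Module LinearMap

theorem Submodule.finrank_map_add_finrank_inf_ker {K V W : Type*} [Field K]
    [AddCommGroup V] [Module K V] [AddCommGroup W] [Module K W] [FiniteDimensional K V]
    (f : V →ₗ[K] W) (p : Submodule K V) :
    finrank K (p.map f) + finrank K ↥(p ⊓ ker f) = finrank K p := by
  have h := finrank_range_add_finrank_ker (f.domRestrict p)
  rwa [range_domRestrict, ker_domRestrict, ← Submodule.finrank_map_subtype_eq,
    Submodule.map_comap_subtype] at h

namespace Matrix

variable {K R m n₁ n₂ : Type*} [Fintype m]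

theorem rank_add_finrank_ker_mulVecLin [Field K] (A : Matrix n₁ m K) :
    A.rank + finrank K (ker A.mulVecLin) = Fintype.card m := by
  rw [rank, finrank_range_add_finrank_ker, finrank_fintype_fun_eq_card]

theorem ker_mulVecLin_fromRows [CommSemiring R] (A : Matrix n₁ m R) (B : Matrix n₂ m R) :
    ker (fromRows A B).mulVecLin = ker A.mulVecLin ⊓ ker B.mulVecLin := by
  ext x
  simp [fromRows_mulVec, funext_iff, Sum.forall]

end Matrix

/-- Rank of a vertical stack: rank([A;B]) = rank(A) + dim(B·N(A)). -/
theorem rank_fromRows_eq_rank_add_dim_image_ker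
    {𝔽 : Type*} [Field 𝔽] {a b m : ℕ}
    (A : Matrix (Fin a) (Fin m) 𝔽) (B : Matrix (Fin b) (Fin m) 𝔽) :
    (Matrix.fromRows A B).rank =
      A.rank + Module.finrank 𝔽 ((LinearMap.ker A.mulVecLin).map B.mulVecLin) := by
  have h_stack := (Matrix.fromRows A B).rank_add_finrank_ker_mulVecLin
  have h_A := A.rank_add_finrank_ker_mulVecLin
  have h_restrict := (ker A.mulVecLin).finrank_map_add_finrank_inf_ker B.mulVecLin
  rw [Matrix.ker_mulVecLin_fromRows] at h_stack
  omega
end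

section
/- The rank-increment condition is upward closed: if I ⊆ J ⊆ [K] and rank([F_I; G_I]) = rank(F_I) + N, then rank([F_J; G_J]) = rank(F_J) + N. -/
open Matrix Module Submodule

section aux
variable {𝔽 : Type*} [Field 𝔽] {M N : ℕ} {ι : Type*} [Fintype ι]

noncomputable def proj (𝔽 : Type*) [Field 𝔽] (M N : ℕ) :
    ((Fin M ⊕ Fin N) → 𝔽) →ₗ[𝔽] (Fin M → 𝔽) :=
  LinearMap.funLeft 𝔽 𝔽 Sum.inl

lemma proj_comp (A : Matrix (Fin M) ι 𝔽) (B : Matrix (Fin N) ι 𝔽) :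
    (proj 𝔽 M N).comp (Matrix.fromRows A B).mulVecLin = A.mulVecLin := by
  ext v i
  rfl

lemma finrank_ker_proj : finrank 𝔽 (LinearMap.ker (proj 𝔽 M N)) = N := by
  have hsurj : Function.Surjective (proj 𝔽 M N) :=
    LinearMap.funLeft_surjective_of_injective 𝔽 𝔽 _ Sum.inl_injective
  have h := LinearMap.finrank_range_add_finrank_ker (proj 𝔽 M N)
  rw [LinearMap.range_eq_top.mpr hsurj, finrank_top, finrank_pi, finrank_pi] at h
  simp only [Fintype.card_sum, Fintype.card_fin] at h
  omega

lemma rank_fromRows_eq (A : Matrix (Fin M) ι 𝔽) (B : Matrix (Fin N) ι 𝔽) :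
    (Matrix.fromRows A B).rank =
      A.rank + finrank 𝔽
        ((LinearMap.range (Matrix.fromRows A B).mulVecLin) ⊓ LinearMap.ker (proj 𝔽 M N) :
          Submodule 𝔽 _) := by
  set W := LinearMap.range (Matrix.fromRows A B).mulVecLin
  have h := LinearMap.finrank_range_add_finrank_ker ((proj 𝔽 M N).domRestrict W)
  rw [LinearMap.range_domRestrict, LinearMap.ker_domRestrict] at h
  have hmap : Submodule.map (proj 𝔽 M N) W = LinearMap.range A.mulVecLin := by
    rw [← proj_comp A B, LinearMap.range_comp]
  have hker : finrank 𝔽 (Submodule.comap W.subtype (LinearMap.ker (proj 𝔽 M N))) =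
      finrank 𝔽 ((W ⊓ LinearMap.ker (proj 𝔽 M N) : Submodule 𝔽 _)) := by
    rw [← Submodule.map_comap_subtype]
    exact (Submodule.equivMapOfInjective W.subtype (Submodule.injective_subtype W)
      _).finrank_eq
  rw [hmap, hker] at h
  rw [Matrix.rank, Matrix.rank, ← h]
end aux

/-- The submatrix of `A` formed by the columns indexed by the subset `I`. -/
def colSub {𝔽 : Type*} {M K : ℕ} (A : Matrix (Fin M) (Fin K) 𝔽) (I : Finset (Fin K)) :
    Matrix (Fin M) {x // x ∈ I} 𝔽 :=
  A.submatrix id Subtype.val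

/-- The rank-increment condition is upward closed under set inclusion. -/
theorem rank_increment_upward_closed
    {𝔽 : Type*} [Field 𝔽] [Fintype 𝔽] {M N K : ℕ}
    (F : Matrix (Fin M) (Fin K) 𝔽) (G : Matrix (Fin N) (Fin K) 𝔽)
    (I J : Finset (Fin K)) (hIJ : I ⊆ J)
    (hI : (Matrix.fromRows (colSub F I) (colSub G I)).rank = (colSub F I).rank + N) :
    (Matrix.fromRows (colSub F J) (colSub G J)).rank = (colSub F J).rank + N := by
  set WI := LinearMap.range (Matrix.fromRows (colSub F I) (colSub G I)).mulVecLin with hWI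
  set WJ := LinearMap.range (Matrix.fromRows (colSub F J) (colSub G J)).mulVecLin with hWJ
  set kerπ := LinearMap.ker (proj 𝔽 M N) with hk
  -- from hI: W_I ⊓ ker π = ker π
  have hrI := rank_fromRows_eq (colSub F I) (colSub G I)
  rw [hI, ← hWI, ← hk] at hrI
  have hfin : finrank 𝔽 ((WI ⊓ kerπ : Submodule 𝔽 _)) = N := by omega
  have hle : kerπ ≤ WI := by
    have := Submodule.eq_of_le_of_finrank_eq (inf_le_right : WI ⊓ kerπ ≤ kerπ)
      (by rw [hfin, finrank_ker_proj])
    rw [← this]; exact inf_le_left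
  -- W_I ≤ W_J
  have hWIJ : WI ≤ WJ := by
    rw [hWI, hWJ, Matrix.range_mulVecLin, Matrix.range_mulVecLin]
    apply Submodule.span_mono
    rintro _ ⟨x, rfl⟩
    refine ⟨⟨x.1, hIJ x.2⟩, ?_⟩
    funext r
    cases r <;> rfl
  have hleJ : kerπ ≤ WJ := hle.trans hWIJ
  have hinfJ : WJ ⊓ kerπ = kerπ := inf_eq_right.mpr hleJ
  have hrJ := rank_fromRows_eq (colSub F J) (colSub G J)
  rw [← hWJ, ← hk, hinfJ, finrank_ker_proj] at hrJ
  exact hrJ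
end

section
/- Let I* ⊆ [K] satisfy the rank-increment condition rank([F_{I*}; G_{I*}]) = rank(F_{I*}) + N, and suppose I* is inclusion-wise minimal with this property (i.e., no proper subset of I* satisfies the condition). Then |I*| = N + rank(F_{I*}); equivalently, the matrix [F_{I*}; G_{I*}] has full column rank. -/
/-!
If the columns of `[F_I; G_I]` are linearly independent, its rank is `|I|` and the claim is the
rank-increment identity. Otherwise some column `j ∈ I` of `[F; G]` lies in the span of the other
columns indexed by `I`; projecting to the top block, the same holds for `F`. Deleting `j` then
changes neither rank, so `I \ {j}` still satisfies the condition, contradicting minimality.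
-/

open Submodule

namespace Matrix

variable {m n R : Type*}

theorem fromRows_submatrix_id {m₁ m₂ n₀ : Type*} (A₁ : Matrix m₁ n R) (A₂ : Matrix m₂ n R)
    (c : n₀ → n) :
    fromRows (A₁.submatrix id c) (A₂.submatrix id c) = (fromRows A₁ A₂).submatrix id c := by
  ext (i | i) j <;> rfl

theorem col_mem_span_image_of_fromRows [Semiring R] {m₁ m₂ : Type*} {A₁ : Matrix m₁ n R}
    {A₂ : Matrix m₂ n R} {j : n} {S : Set n}
    (h : (fromRows A₁ A₂).col j ∈ span R ((fromRows A₁ A₂).col '' S)) :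
    A₁.col j ∈ span R (A₁.col '' S) := by
  have := apply_mem_span_image_of_mem_span (LinearMap.funLeft R R Sum.inl) h
  rwa [Set.image_image] at this

theorem rank_submatrix_val_eq_finrank_span [CommSemiring R] (A : Matrix m n R) (s : Finset n) :
    (A.submatrix id ((↑) : s → n)).rank = Module.finrank R (span R (A.col '' s)) := by
  have hcols : Set.range (A.submatrix id ((↑) : s → n)).col = A.col '' s :=
    (Set.range_comp A.col _).trans (congrArg _ Subtype.range_coe)
  rw [rank_eq_finrank_span_cols, hcols]

theorem rank_submatrix_val_of_linearIndepOn [CommRing R] [Nontrivial R] {A : Matrix m n R}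
    {s : Finset n} (h : LinearIndepOn R A.col s) :
    (A.submatrix id ((↑) : s → n)).rank = s.card := by
  rw [rank_eq_finrank_span_cols]
  exact (finrank_span_eq_card h).trans (by simp)

theorem rank_submatrix_erase_of_mem_span [CommSemiring R] [DecidableEq n] (A : Matrix m n R)
    {s : Finset n} {j : n} (hj : j ∈ s) (h : A.col j ∈ span R (A.col '' (s \ {j}))) :
    (A.submatrix id ((↑) : s.erase j → n)).rank = (A.submatrix id ((↑) : s → n)).rank := by
  rw [rank_submatrix_val_eq_finrank_span, rank_submatrix_val_eq_finrank_span, Finset.coe_erase,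
    ← span_insert_eq_span h, ← Set.image_insert_eq, Set.insert_sdiff_singleton,
    Set.insert_eq_of_mem (Finset.mem_coe.2 hj)]

end Matrix

open Matrix

theorem card_eq_of_minimal_rank_increment_general
    {𝔽 : Type*} [Field 𝔽] {M N K : ℕ}
    (F : Matrix (Fin M) (Fin K) 𝔽) (G : Matrix (Fin N) (Fin K) 𝔽)
    (I : Finset (Fin K))
    (hI : (Matrix.fromRows (colSub F I) (colSub G I)).rank = (colSub F I).rank + N)
    (hmin : ∀ J : Finset (Fin K), J ⊂ I →
      (Matrix.fromRows (colSub F J) (colSub G J)).rank ≠ (colSub F J).rank + N) :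
    I.card = N + (colSub F I).rank := by
  simp only [colSub, fromRows_submatrix_id] at hI hmin ⊢
  by_cases hind : LinearIndepOn 𝔽 (fromRows F G).col (I : Set (Fin K))
  · rw [← rank_submatrix_val_of_linearIndepOn hind, hI, add_comm]
  · obtain ⟨j, hj, hdep⟩ :
        ∃ j ∈ I, (fromRows F G).col j ∈ span 𝔽 ((fromRows F G).col '' (↑I \ {j})) := by
      simpa [linearIndepOn_iff_notMem_span] using hind
    refine (hmin (I.erase j) (Finset.erase_ssubset hj) ?_).elim
    rw [rank_submatrix_erase_of_mem_span _ hj hdep,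
      rank_submatrix_erase_of_mem_span _ hj (col_mem_span_image_of_fromRows hdep), hI]

/-- An inclusion-wise minimal set satisfying the rank-increment condition has
size exactly N + rank(F_{I*}), i.e. [F_{I*};G_{I*}] has full column rank. -/
theorem card_eq_of_minimal_rank_increment
    {𝔽 : Type*} [Field 𝔽] [Fintype 𝔽] {M N K : ℕ}
    (F : Matrix (Fin M) (Fin K) 𝔽) (G : Matrix (Fin N) (Fin K) 𝔽)
    (I : Finset (Fin K))
    (hI : (Matrix.fromRows (colSub F I) (colSub G I)).rank = (colSub F I).rank + N)
    (hmin : ∀ J : Finset (Fin K), J ⊂ I →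
      (Matrix.fromRows (colSub F J) (colSub G J)).rank ≠ (colSub F J).rank + N) :
    I.card = N + (colSub F I).rank :=
  card_eq_of_minimal_rank_increment_general F G I hI hmin
end

section
/- Over F_3, let W1, W2, W3, S be i.i.d. uniform in F_3, and set X1 = W1 + S, X2 = W2 − S, X3 = W3. Then X1 + X2 + X3 = W1 + W2 + W3, and I(W1 + W3 ; (X1, X2, X3) | W1 + W2 + W3) = 0. -/
/-- Probability mass function of a random variable on a finite sample space
equipped with the uniform distribution. -/
noncomputable def upm {Ω α : Type*} [Fintype Ω] [DecidableEq α] (X : Ω → α) (x : α) : ℝ :=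
  ((Finset.univ.filter fun ω => X ω = x).card : ℝ) / (Fintype.card Ω : ℝ)

/-- Shannon entropy (in nats) of a random variable on a finite uniform sample space. -/
noncomputable def uH {Ω α : Type*} [Fintype Ω] [Fintype α] [DecidableEq α] (X : Ω → α) : ℝ :=
  -∑ x : α, upm X x * Real.log (upm X x)

/-- Conditional entropy H(X | Y) = H(X, Y) - H(Y). -/
noncomputable def uCondH {Ω α β : Type*} [Fintype Ω] [Fintype α] [Fintype β]
    [DecidableEq α] [DecidableEq β] (X : Ω → α) (Y : Ω → β) : ℝ :=
  uH (fun ω => (X ω, Y ω)) - uH Y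

/-- Conditional mutual information I(X ; Y | Z) = H(X|Z) + H(Y|Z) - H(X,Y|Z). -/
noncomputable def uCMI {Ω α β γ : Type*} [Fintype Ω] [Fintype α] [Fintype β] [Fintype γ]
    [DecidableEq α] [DecidableEq β] [DecidableEq γ]
    (X : Ω → α) (Y : Ω → β) (Z : Ω → γ) : ℝ :=
  uCondH X Z + uCondH Y Z - uCondH (fun ω => (X ω, Y ω)) Z

/-!
The four random variables entering the conditional mutual information, namely
`Z = W1 + W2 + W3`, `(K, Z)`, `(Y, Z)` and `(K, Y, Z)` with `K = W1 + W3` and `Y = (X1, X2, X3)`,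
are linear maps of the uniform vector `(W1, W2, W3, S) ∈ 𝔽₃⁴` of ranks 1, 2, 3 and 4. Each is
therefore uniform on its image, with fibres of size `3 ^ (4 - rank)`, and a variable whose fibres
all have `m` points has entropy `log (81 / m)`. Hence
`I(K ; Y | Z) = H(K, Z) + H(Y, Z) - H(Z) - H(K, Y, Z) = log 9 + log 27 - log 3 - log 81 = 0`.
-/

open Finset

section UniformEntropy

variable {Ω α : Type*} [Fintype Ω] [DecidableEq α]

theorem uH_eq_neg_sum_log_upm [Fintype α] (X : Ω → α) :
    uH X = -∑ ω, Real.log (upm X (X ω)) / Fintype.card Ω := by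
  rw [uH, neg_inj, ← sum_fiberwise univ X fun ω => Real.log (upm X (X ω)) / Fintype.card Ω]
  refine sum_congr rfl fun x _ => ?_
  rw [sum_congr rfl fun ω hω => by rw [(mem_filter.mp hω).2], sum_const, nsmul_eq_mul, upm]
  ring

theorem uH_eq_log_of_fiber_card [Fintype α] (X : Ω → α) (m : ℕ)
    (h : ∀ ω, #{ω' | X ω' = X ω} = m) :
    uH X = Real.log (Fintype.card Ω / m) := by
  have hupm : ∀ ω, upm X (X ω) = m / Fintype.card Ω := fun ω => by rw [upm, h ω]
  simp only [uH_eq_neg_sum_log_upm, hupm, sum_const, card_univ, nsmul_eq_mul]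
  rcases (Fintype.card Ω).eq_zero_or_pos with hN | hN
  · simp [hN]
  · rw [← inv_div (m : ℝ), Real.log_inv]
    field_simp

theorem ne_zero_of_fiber_card {X : Ω → α} {m : ℕ} (h : ∀ ω, #{ω' | X ω' = X ω} = m) (ω : Ω) :
    m ≠ 0 :=
  h ω ▸ card_ne_zero.mpr ⟨ω, mem_filter.mpr ⟨mem_univ ω, rfl⟩⟩

end UniformEntropy

theorem uCMI_eq_zero_of_fiber_card {Ω α β γ : Type*} [Fintype Ω] [Nonempty Ω]
    [Fintype α] [Fintype β] [Fintype γ] [DecidableEq α] [DecidableEq β] [DecidableEq γ]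
    (X : Ω → α) (Y : Ω → β) (Z : Ω → γ) (a b c d : ℕ)
    (hZ : ∀ ω, #{ω' | Z ω' = Z ω} = a)
    (hXZ : ∀ ω, #{ω' | (X ω', Z ω') = (X ω, Z ω)} = b)
    (hYZ : ∀ ω, #{ω' | (Y ω', Z ω') = (Y ω, Z ω)} = c)
    (hXYZ : ∀ ω, #{ω' | ((X ω', Y ω'), Z ω') = ((X ω, Y ω), Z ω)} = d)
    (hprod : b * c = a * d) :
    uCMI X Y Z = 0 := by
  obtain ⟨ω⟩ := ‹Nonempty Ω›
  have ha : (a : ℝ) ≠ 0 := Nat.cast_ne_zero.mpr (ne_zero_of_fiber_card hZ ω)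
  have hb : (b : ℝ) ≠ 0 := Nat.cast_ne_zero.mpr (ne_zero_of_fiber_card hXZ ω)
  have hc : (c : ℝ) ≠ 0 := Nat.cast_ne_zero.mpr (ne_zero_of_fiber_card hYZ ω)
  have hd : (d : ℝ) ≠ 0 := Nat.cast_ne_zero.mpr (ne_zero_of_fiber_card hXYZ ω)
  have hN : (Fintype.card Ω : ℝ) ≠ 0 := Nat.cast_ne_zero.mpr Fintype.card_ne_zero
  have hlog : Real.log b + Real.log c = Real.log a + Real.log d := by
    rw [← Real.log_mul hb hc, ← Real.log_mul ha hd]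
    exact_mod_cast congrArg (fun n : ℕ => Real.log n) hprod
  simp only [uCMI, uCondH, uH_eq_log_of_fiber_card _ _ hZ, uH_eq_log_of_fiber_card _ _ hXZ,
    uH_eq_log_of_fiber_card _ _ hYZ, uH_eq_log_of_fiber_card _ _ hXYZ]
  rw [Real.log_div hN ha, Real.log_div hN hb, Real.log_div hN hc, Real.log_div hN hd]
  linarith

/-- Example 1: over F_3, with (W1, W2, W3, S) i.i.d. uniform and
X1 = W1 + S, X2 = W2 - S, X3 = W3, we have X1 + X2 + X3 = W1 + W2 + W3
(correctness) and I(W1 + W3 ; (X1, X2, X3) | W1 + W2 + W3) = 0 (security). -/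
theorem example1_scheme :
    (∀ ω : ZMod 3 × ZMod 3 × ZMod 3 × ZMod 3,
        (ω.1 + ω.2.2.2) + (ω.2.1 - ω.2.2.2) + ω.2.2.1 = ω.1 + ω.2.1 + ω.2.2.1) ∧
      uCMI (fun ω : ZMod 3 × ZMod 3 × ZMod 3 × ZMod 3 => ω.1 + ω.2.2.1)
           (fun ω => (ω.1 + ω.2.2.2, ω.2.1 - ω.2.2.2, ω.2.2.1))
           (fun ω => ω.1 + ω.2.1 + ω.2.2.1) = 0 := by
  refine ⟨fun ω => by ring, ?_⟩
  exact uCMI_eq_zero_of_fiber_card _ _ _ 27 9 3 1 (by decide) (by decide) (by decide) (by decide)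
    rfl
end

section
/- Over F_7, let F be the 2×6 matrix [[1,0,5,5,3,5],[0,1,5,6,0,3]] and G' the 2×6 matrix [[0,0,0,1,0,1],[0,0,1,0,3,3]]. Let P be the 6×2 matrix with columns (2,2,1,0,0,0)^T and (2,1,0,1,0,0)^T. Then F·P = 0 (the 2×2 zero matrix) and rank(G'·P) = 2. -/
def F16 : Matrix (Fin 2) (Fin 6) (ZMod 7) := !![1, 0, 5, 5, 3, 5; 0, 1, 5, 6, 0, 3]
def G16 : Matrix (Fin 2) (Fin 6) (ZMod 7) := !![0, 0, 0, 1, 0, 1; 0, 0, 1, 0, 3, 3]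
def P16 : Matrix (Fin 6) (Fin 2) (ZMod 7) := !![2, 2; 2, 1; 1, 0; 0, 1; 0, 0; 0, 0]

theorem Matrix.rank_fin_two_swap {R : Type*} [CommSemiring R] [StrongRankCondition R] :
    (!![0, 1; 1, 0] : Matrix (Fin 2) (Fin 2) R).rank = 2 := by
  have hinv : (!![0, 1; 1, 0] : Matrix (Fin 2) (Fin 2) R) * !![0, 1; 1, 0] = 1 := by
    simp [Matrix.one_fin_two]
  simpa using Matrix.rank_of_isUnit _ ⟨⟨_, _, hinv, hinv⟩, rfl⟩

theorem F16_mul_P16 : F16 * P16 = 0 := by decide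

theorem G16_mul_P16 : G16 * P16 = !![0, 1; 1, 0] := by decide

/-- Example 2: the explicit encoding matrix satisfies `F·P = 0` and `rank(G'·P) = 2`. -/
theorem example2_encoding_matrix : F16 * P16 = 0 ∧ (G16 * P16).rank = 2 := by
  -- makes `ZMod 7` nontrivial, hence of strong rank condition
  have : Fact (1 < 7) := ⟨by decide⟩
  exact ⟨F16_mul_P16, G16_mul_P16 ▸ Matrix.rank_fin_two_swap⟩
end
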